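/- Let G and G' be finite simple graphs on n vertices whose A_α matrices have the same characteristic polynomial for some real α with 0 < α ≤ 1. Let d_1 ≥ d_2 ≥ ⋯ ≥ d_n and d'_1 ≥ d'_2 ≥ ⋯ ≥ d'_n be the degree sequences of G and G', respectively. Then ∑_{1≤i<j≤n} d_i d_j = ∑_{1≤i<j≤n} d'_i d'_j and ∑_{1≤i≤n} d_i² = ∑_{1≤i≤n} (d'_i)². -/

import Mathlib

open SimpleGraph Matrix Finset

attribute [local instance] Classical.propDecidable

/-- The matrix `A_α(G) = α·D(G) + (1-α)·A(G)` of a finite simple graph `G`,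
where `D(G)` is the diagonal matrix of vertex degrees and `A(G)` is the
adjacency matrix over `ℝ`. -/
noncomputable def Aalpha {V : Type} [Fintype V] (G : SimpleGraph V) (α : ℝ) :
    Matrix V V ℝ :=
  α • Matrix.diagonal (fun v => (G.degree v : ℝ)) + (1 - α) • G.adjMatrix ℝ

/-- `G` is determined by its `A_α`-spectrum: every finite simple graph whose
`A_α` matrix has the same characteristic polynomial as that of `G` is
isomorphic to `G`. -/
def IsDSAalpha {V : Type} [Fintype V] (G : SimpleGraph V) (α : ℝ) : Prop :=
  ∀ (W : Type) [Fintype W] (H : SimpleGraph W),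
    (Aalpha H α).charpoly = (Aalpha G α).charpoly → Nonempty (H ≃g G)

/-- The largest eigenvalue of a matrix: the supremum of the (real) roots of its
characteristic polynomial.  For a real symmetric matrix these roots are exactly
its eigenvalues. -/
noncomputable def lambda1 {V : Type} [Fintype V] (M : Matrix V V ℝ) : ℝ :=
  sSup {x : ℝ | M.charpoly.IsRoot x}

/-- The join `G ∨ H` of two graphs: their disjoint union together with all
edges joining a vertex of `G` to a vertex of `H`. -/
def joinG {V W : Type} (G : SimpleGraph V) (H : SimpleGraph W) :
    SimpleGraph (V ⊕ W) :=
  (G ⊕g H) ⊔ completeBipartiteGraph V W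

/-- The `M`-coronal `Γ_M(x) = 1ᵀ (xI − M)⁻¹ 1`: the sum of all entries of
`(xI − M)⁻¹`. -/
noncomputable def coronal {V : Type} [Fintype V] (M : Matrix V V ℝ) (x : ℝ) : ℝ :=
  ∑ i, ∑ j, (x • (1 : Matrix V V ℝ) - M)⁻¹ i j

/-- Disjoint union of a family of graphs: two vertices are adjacent iff they lie
in the same summand and are adjacent there. -/
def sigmaGraph {ι : Type} {F : ι → Type} (G : ∀ i, SimpleGraph (F i)) :
    SimpleGraph (Σ i, F i) :=
  SimpleGraph.fromRel (fun x y => ∃ h : x.1 = y.1, (G y.1).Adj (h ▸ x.2) y.2)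


/-! The `k`-th power sum of the eigenvalues of a Hermitian matrix is the trace of its `k`-th
power, so `A_α`-cospectral graphs have `tr A_α = tr A_α'` and `tr A_α² = tr A_α'²`. Now
`tr A_α = α ∑ dᵢ` and, as `A²` has the degrees on its diagonal while `DA` has zero diagonal,
`tr A_α² = α² ∑ dᵢ² + (1 - α)² ∑ dᵢ`. Since `α ≠ 0` both `∑ dᵢ` and `∑ dᵢ²` are spectral
invariants, and so is `∑_{i<j} dᵢ dⱼ = ((∑ dᵢ)² - ∑ dᵢ²) / 2`. -/

namespace Matrix.IsHermitian

variable {𝕜 n : Type*} [RCLike 𝕜] [Fintype n] [DecidableEq n] {A : Matrix n n 𝕜}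

theorem trace_pow_eq_sum_eigenvalues_pow (hA : A.IsHermitian) (k : ℕ) :
    (A ^ k).trace = ∑ i, (hA.eigenvalues i : 𝕜) ^ k := by
  conv_lhs => rw [hA.spectral_theorem, ← map_pow, Unitary.conjStarAlgAut_apply, trace_mul_cycle,
    Unitary.coe_star_mul_self, one_mul, diagonal_pow, trace_diagonal]
  rfl

theorem trace_pow_eq_sum_roots_charpoly_pow (hA : A.IsHermitian) (k : ℕ) :
    (A ^ k).trace = (A.charpoly.roots.map (· ^ k)).sum := by
  simp [hA.trace_pow_eq_sum_eigenvalues_pow, hA.roots_charpoly_eq_eigenvalues]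

theorem trace_pow_eq_of_charpoly_eq {m : Type*} [Fintype m] [DecidableEq m] {B : Matrix m m 𝕜}
    (hA : A.IsHermitian) (hB : B.IsHermitian) (h : A.charpoly = B.charpoly) (k : ℕ) :
    (A ^ k).trace = (B ^ k).trace := by
  rw [hA.trace_pow_eq_sum_roots_charpoly_pow, hB.trace_pow_eq_sum_roots_charpoly_pow, h]

end Matrix.IsHermitian

theorem sq_sum_eq_sum_sq_add_two_mul_sum_lt {ι R : Type*} [Fintype ι] [LinearOrder ι]
    [DecidableRel (α := ι) (· < ·)] [CommSemiring R] (x : ι → R) :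
    (∑ i, x i) ^ 2 = ∑ i, x i ^ 2
      + 2 * ∑ p ∈ Finset.univ.filter (fun p : ι × ι => p.1 < p.2), x p.1 * x p.2 := by
  have hsplit (i j : ι) : x i * x j = (if i < j then x i * x j else 0)
      + (if i = j then x i * x j else 0) + (if j < i then x j * x i else 0) := by
    rcases lt_trichotomy i j with h | rfl | h
    · simp [h, h.ne, h.not_gt]
    · simp
    · simp [h, h.ne', h.not_gt, mul_comm]
  have hlt : ∑ i, ∑ j, (if i < j then x i * x j else 0)
      = ∑ p ∈ Finset.univ.filter (fun p : ι × ι => p.1 < p.2), x p.1 * x p.2 := by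
    rw [sum_filter, Fintype.sum_prod_type]
  have hgt : ∑ i, ∑ j, (if j < i then x j * x i else 0)
      = ∑ i, ∑ j, (if i < j then x i * x j else 0) := sum_comm
  calc (∑ i, x i) ^ 2 = ∑ i, ∑ j, x i * x j := by rw [sq, Fintype.sum_mul_sum]
    _ = ∑ i, ∑ j, (if i < j then x i * x j else 0) + ∑ i, x i * x i
        + ∑ i, ∑ j, (if j < i then x j * x i else 0) := by
      simp only [← sum_add_distrib]
      refine sum_congr rfl fun i _ => ?_
      simp [sum_congr rfl fun j _ => hsplit i j, sum_add_distrib]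
    _ = _ := by rw [hgt, hlt]; simp only [sq]; ring

section Aalpha

variable {V W : Type} [Fintype V] [Fintype W]

theorem isHermitian_aalpha (G : SimpleGraph V) (α : ℝ) : (Aalpha G α).IsHermitian :=
  ((isHermitian_diagonal _).smul (IsSelfAdjoint.all α)).add
    ((G.isHermitian_adjMatrix ℝ).smul (IsSelfAdjoint.all (1 - α)))

theorem trace_aalpha (G : SimpleGraph V) (α : ℝ) :
    (Aalpha G α).trace = α * ∑ v, (G.degree v : ℝ) := by
  simp [Aalpha, trace_diagonal]

theorem trace_aalpha_sq (G : SimpleGraph V) (α : ℝ) :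
    (Aalpha G α ^ 2).trace
      = α ^ 2 * ∑ v, (G.degree v : ℝ) ^ 2 + (1 - α) ^ 2 * ∑ v, (G.degree v : ℝ) := by
  rw [sq, Aalpha]
  set D := diagonal fun v => (G.degree v : ℝ)
  set A := G.adjMatrix ℝ
  have hDD : (D * D).trace = ∑ v, (G.degree v : ℝ) ^ 2 := by
    simp [D, diagonal_mul_diagonal, trace_diagonal, sq]
  have hDA : (D * A).trace = 0 := by
    simp only [D, A, trace, diag_apply, diagonal_mul, adjMatrix_apply, SimpleGraph.irrefl,
      if_false, mul_zero, sum_const_zero]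
  have hAA : (A * A).trace = ∑ v, (G.degree v : ℝ) := by
    simp only [A, trace, diag_apply, adjMatrix_mul_self_apply_self]
  simp only [add_mul, mul_add, smul_mul_smul, trace_add, trace_smul, trace_mul_comm A D,
    hDD, hDA, hAA, smul_eq_mul]
  ring

variable {G : SimpleGraph V} {G' : SimpleGraph W} {α : ℝ}

theorem sum_degree_eq_of_charpoly_aalpha_eq (hα : α ≠ 0)
    (h : (Aalpha G α).charpoly = (Aalpha G' α).charpoly) :
    ∑ v, G.degree v = ∑ w, G'.degree w := by
  have htrace := (isHermitian_aalpha G α).trace_pow_eq_of_charpoly_eq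
    (isHermitian_aalpha G' α) h 1
  rw [pow_one, pow_one, trace_aalpha, trace_aalpha] at htrace
  exact_mod_cast mul_left_cancel₀ hα htrace

theorem sum_degree_sq_eq_of_charpoly_aalpha_eq (hα : α ≠ 0)
    (h : (Aalpha G α).charpoly = (Aalpha G' α).charpoly) :
    ∑ v, G.degree v ^ 2 = ∑ w, G'.degree w ^ 2 := by
  have htrace := (isHermitian_aalpha G α).trace_pow_eq_of_charpoly_eq
    (isHermitian_aalpha G' α) h 2
  have hsum : ∑ v, (G.degree v : ℝ) = ∑ w, (G'.degree w : ℝ) := by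
    exact_mod_cast sum_degree_eq_of_charpoly_aalpha_eq hα h
  rw [trace_aalpha_sq, trace_aalpha_sq, hsum, add_left_inj] at htrace
  exact_mod_cast mul_left_cancel₀ (pow_ne_zero 2 hα) htrace

end Aalpha

theorem degree_power_sums_of_Aalpha_cospectral_general
    {V W : Type} [Fintype V] [Fintype W]
    (G : SimpleGraph V) (G' : SimpleGraph W)
    (n : ℕ)
    (α : ℝ) (hα0 : 0 < α)
    (h : (Aalpha G α).charpoly = (Aalpha G' α).charpoly)
    (d d' : Fin n → ℕ)
    (e : Fin n ≃ V) (e' : Fin n ≃ W)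
    (hde : ∀ i, d i = G.degree (e i)) (hde' : ∀ i, d' i = G'.degree (e' i)) :
    (∑ p ∈ Finset.univ.filter (fun p : Fin n × Fin n => p.1 < p.2), d p.1 * d p.2 =
      ∑ p ∈ Finset.univ.filter (fun p : Fin n × Fin n => p.1 < p.2), d' p.1 * d' p.2) ∧
    (∑ i, (d i) ^ 2 = ∑ i, (d' i) ^ 2) := by
  have hsum : ∑ i, d i = ∑ i, d' i := by
    simp only [hde, hde', e.sum_comp fun v => G.degree v, e'.sum_comp fun w => G'.degree w]
    exact sum_degree_eq_of_charpoly_aalpha_eq hα0.ne' h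
  have hsq : ∑ i, d i ^ 2 = ∑ i, d' i ^ 2 := by
    simp only [hde, hde', e.sum_comp fun v => G.degree v ^ 2,
      e'.sum_comp fun w => G'.degree w ^ 2]
    exact sum_degree_sq_eq_of_charpoly_aalpha_eq hα0.ne' h
  refine ⟨?_, hsq⟩
  have hexpand := sq_sum_eq_sum_sq_add_two_mul_sum_lt d'
  rw [← hsum, sq_sum_eq_sum_sq_add_two_mul_sum_lt d, ← hsq] at hexpand
  exact Nat.eq_of_mul_eq_mul_left two_pos (Nat.add_left_cancel hexpand)

theorem degree_power_sums_of_Aalpha_cospectral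
    {V W : Type} [Fintype V] [Fintype W]
    (G : SimpleGraph V) (G' : SimpleGraph W)
    (n : ℕ) (hV : Fintype.card V = n) (hW : Fintype.card W = n)
    (α : ℝ) (hα0 : 0 < α) (hα1 : α ≤ 1)
    (h : (Aalpha G α).charpoly = (Aalpha G' α).charpoly)
    (d d' : Fin n → ℕ) (hd : Antitone d) (hd' : Antitone d')
    (e : Fin n ≃ V) (e' : Fin n ≃ W)
    (hde : ∀ i, d i = G.degree (e i)) (hde' : ∀ i, d' i = G'.degree (e' i)) :
    (∑ p ∈ Finset.univ.filter (fun p : Fin n × Fin n => p.1 < p.2), d p.1 * d p.2 =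
      ∑ p ∈ Finset.univ.filter (fun p : Fin n × Fin n => p.1 < p.2), d' p.1 * d' p.2) ∧
    (∑ i, (d i) ^ 2 = ∑ i, (d' i) ^ 2) :=
  degree_power_sums_of_Aalpha_cospectral_general G G' n α hα0 h d d' e e' hde hde'
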